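/- arXiv:1702.03029 — 2 statements merged into one kernel-verified Lean document; each statement's English description precedes it below -/
import Mathlib

section
/- Suppose the block operator matrix L is a bijection of X^n, let γ = (γ_{ij}) be the unique solution of L·γ = diag(Γ_1,…,Γ_n) (componentwise: γ_{ij} + Γ_i Σ_{k≠i} γ_{kj} = δ_{ij} Γ_i), and let Γ be defined by I − Γ = (I − G)^{−1}. Then the components γ_{ij} are reconstructed from Γ by the formula γ_{ij} = −δ_{ij} G_j − G_i (I − Γ) G_j. -/
/-!
Write `S_j = ∑ k, γ k j`. Since `(1 - G i) * Γ i = -G i`, the `i`-th equation of the system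
`L γ = diag Γ`, multiplied by `1 - G i = (1 - Γ i)⁻¹`, solves for one entry in terms of the column
sum: `γ i j = G i * (S_j - δ_{ij})`. Summing over `i` gives `(1 - G) S_j = -G j`, hence
`S_j = -(1 - Γ) G j`, and substituting back yields the formula.
-/

open Finset

section Ring

variable {R : Type*} [Ring R]

theorem one_sub_mul_eq_neg_of_mul_one_sub_eq_one {g r : R} (h : (1 - g) * (1 - r) = 1) :
    (1 - g) * r = -g :=
  calc (1 - g) * r = (1 - g) - (1 - g) * (1 - r) := by noncomm_ring
    _ = -g := by rw [h]; abel

theorem eq_mul_sub_of_add_mul_sub_eq_mul {g r x s e : R} (h : (1 - g) * (1 - r) = 1)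
    (hx : x + r * (s - x) = r * e) : x = g * (s - e) := by
  have hx' : (1 - r) * x = r * (e - s) := by rw [mul_sub, ← hx]; noncomm_ring
  calc x = (1 - g) * (1 - r) * x := by rw [h, one_mul]
    _ = (1 - g) * r * (e - s) := by rw [mul_assoc, hx', mul_assoc]
    _ = g * (s - e) := by rw [one_sub_mul_eq_neg_of_mul_one_sub_eq_one h]; noncomm_ring

variable {ι : Type*} [Fintype ι] [DecidableEq ι] {G Γ : ι → R} {γ : ι → ι → R}

theorem entry_eq_mul_colSum_sub (hΓ : ∀ i, (1 - G i) * (1 - Γ i) = 1)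
    (hγ : ∀ i j, γ i j + Γ i * ∑ k ∈ univ.erase i, γ k j = if i = j then Γ i else 0)
    (i j : ι) : γ i j = G i * (∑ k, γ k j - if i = j then 1 else 0) := by
  refine eq_mul_sub_of_add_mul_sub_eq_mul (hΓ i) ?_
  rw [← sum_erase_eq_sub (mem_univ i), hγ]
  split_ifs <;> simp

theorem colSum_eq_neg_mul {Γtot : R} (hΓ : ∀ i, (1 - G i) * (1 - Γ i) = 1)
    (hγ : ∀ i j, γ i j + Γ i * ∑ k ∈ univ.erase i, γ k j = if i = j then Γ i else 0)
    (hΓtot : (1 - Γtot) * (1 - ∑ i, G i) = 1) (j : ι) :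
    ∑ k, γ k j = -((1 - Γtot) * G j) := by
  set S := ∑ k, γ k j
  have hS : S = (∑ k, G k) * S - G j :=
    calc S = ∑ k, G k * (S - if k = j then 1 else 0) :=
          sum_congr rfl fun k _ => entry_eq_mul_colSum_sub hΓ hγ k j
      _ = (∑ k, G k) * S - G j := by simp [mul_sub, sum_sub_distrib, sum_mul]
  have hfix : (1 - ∑ k, G k) * S = -G j := by
    rw [sub_mul, one_mul]
    nth_rewrite 1 [hS]
    abel
  calc S = (1 - Γtot) * (1 - ∑ k, G k) * S := by rw [hΓtot, one_mul]
    _ = -((1 - Γtot) * G j) := by rw [mul_assoc, hfix, mul_neg]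

theorem entry_eq_neg_ite_sub_mul_mul {Γtot : R} (hΓ : ∀ i, (1 - G i) * (1 - Γ i) = 1)
    (hγ : ∀ i j, γ i j + Γ i * ∑ k ∈ univ.erase i, γ k j = if i = j then Γ i else 0)
    (hΓtot : (1 - Γtot) * (1 - ∑ i, G i) = 1) (i j : ι) :
    γ i j = -(if i = j then G j else 0) - G i * (1 - Γtot) * G j := by
  rw [entry_eq_mul_colSum_sub hΓ hγ, colSum_eq_neg_mul hΓ hγ hΓtot]
  split_ifs with hij
  · subst hij; noncomm_ring
  · noncomm_ring

end Ring

theorem stmt_2_general {X : Type*} [AddCommGroup X] [Module ℂ X] (n : ℕ)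
    (G Γ : Fin n → Module.End ℂ X)
    (hΓ : ∀ i, (1 - G i) * (1 - Γ i) = 1 ∧ (1 - Γ i) * (1 - G i) = 1)
    (γ : Fin n → Fin n → Module.End ℂ X)
    (hγ : ∀ i j, γ i j + Γ i * (∑ k ∈ Finset.univ.erase i, γ k j)
      = if i = j then Γ i else 0)
    (Γtot : Module.End ℂ X)
    (hΓtot₂ : (1 - Γtot) * (1 - ∑ i, G i) = 1) :
    ∀ i j, γ i j = -(if i = j then G j else 0) - G i * (1 - Γtot) * G j :=
  entry_eq_neg_ite_sub_mul_mul (fun i => (hΓ i).1) hγ hΓtot₂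

/-- In the setting of the alternating Schwartz method (block matrix `L`
bijective, `γ` the solution of `L ⬝ γ = diag (Γ 1, …, Γ n)`, and `Γ` defined by
`I - Γ = (I - G)⁻¹` with `G = ∑ i, G i`), the components `γ i j` are reconstructed
from `Γ` via `γ i j = -δ_{ij} G j - G i (I - Γ) G j`. -/
theorem stmt_2 {X : Type*} [AddCommGroup X] [Module ℂ X] (n : ℕ) (hn : 1 ≤ n)
    (G Γ : Fin n → Module.End ℂ X)
    (hΓ : ∀ i, (1 - G i) * (1 - Γ i) = 1 ∧ (1 - Γ i) * (1 - G i) = 1)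
    (hL : Function.Bijective (fun φ : Fin n → X =>
      fun i => φ i + Γ i (∑ k ∈ Finset.univ.erase i, φ k)))
    (γ : Fin n → Fin n → Module.End ℂ X)
    (hγ : ∀ i j, γ i j + Γ i * (∑ k ∈ Finset.univ.erase i, γ k j)
      = if i = j then Γ i else 0)
    (Γtot : Module.End ℂ X)
    (hΓtot₁ : (1 - ∑ i, G i) * (1 - Γtot) = 1)
    (hΓtot₂ : (1 - Γtot) * (1 - ∑ i, G i) = 1) :
    ∀ i j, γ i j = -(if i = j then G j else 0) - G i * (1 - Γtot) * G j :=
  stmt_2_general n G Γ hΓ γ hγ Γtot hΓtot₂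
end

section
/- If the operator I − G is a bijection of X together with all the operators I − G_i, then the block operator matrix L is a bijection of X^n, and the components of its inverse are given explicitly by ω_{ij} = (I − G_i)δ_{ij} + G_i (I − Γ)(I − G_j), where Γ is defined by I − Γ = (I − G)^{−1}; that is, the map ψ ↦ (Σ_j ω_{ij} ψ_j)_{i=1}^n is a two-sided inverse of L. -/
/-!
With `s = ∑ φ`, the reflection identities `(I - Gᵢ) Γᵢ = -Gᵢ` turn `(I - Gᵢ)(Lφ)ᵢ` into
`φᵢ - Gᵢ s`; summing over `i` produces `(I - G) s`, which `I - Γ` sends back to `s`, so the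
correction `Gᵢ (I - Γ)(I - G) s` in `ω` cancels exactly. Conversely, the components of `ψ' = ωψ`
sum to `v = (I - Γ) ∑ⱼ (I - Gⱼ) ψⱼ`, and `(Lψ')ᵢ = ψ'ᵢ + Γᵢ (I - Gᵢ)(v - ψᵢ)` reduces to `ψᵢ`
by `Γᵢ (I - Gᵢ) = -Gᵢ`.
-/

open Finset

theorem one_sub_mul_eq_neg_of_one_sub_mul_one_sub_eq_one {R : Type*} [Ring R] {a b : R}
    (h : (1 - a) * (1 - b) = 1) : (1 - a) * b = -a := by
  calc (1 - a) * b = (1 - a) - (1 - a) * (1 - b) := by noncomm_ring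
    _ = -a := by rw [h]; abel

theorem mul_one_sub_eq_neg_of_one_sub_mul_one_sub_eq_one {R : Type*} [Ring R] {a b : R}
    (h : (1 - a) * (1 - b) = 1) : a * (1 - b) = -b := by
  calc a * (1 - b) = (1 - b) - (1 - a) * (1 - b) := by noncomm_ring
    _ = -b := by rw [h]; abel

namespace BlockReflection

variable {ι R M : Type*} [Fintype ι] [DecidableEq ι] [Semiring R] [AddCommGroup M] [Module R M]

def reflectionOp (Γ : ι → Module.End R M) (φ : ι → M) : ι → M :=
  fun i => φ i + Γ i (∑ k ∈ univ.erase i, φ k)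

/-- The matrix `ω` of the statement, with `A` standing for `I - Γ`. -/
def reflectionOpInv (G : ι → Module.End R M) (A : Module.End R M) (ψ : ι → M) : ι → M :=
  fun j => ∑ k, ((if j = k then 1 - G j else 0) + G j * A * (1 - G k)) (ψ k)

theorem reflectionOp_apply (Γ : ι → Module.End R M) (φ : ι → M) (i : ι) :
    reflectionOp Γ φ i = φ i + Γ i (∑ k, φ k - φ i) := by
  rw [reflectionOp, sum_erase_eq_sub (mem_univ i)]

theorem reflectionOpInv_apply (G : ι → Module.End R M) (A : Module.End R M) (ψ : ι → M) (j : ι) :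
    reflectionOpInv G A ψ j = (1 - G j) (ψ j) + G j (A (∑ k, (1 - G k) (ψ k))) := by
  simp only [reflectionOpInv, LinearMap.add_apply, sum_add_distrib, Module.End.mul_apply,
    map_sum]
  rw [sum_eq_single_of_mem j (mem_univ j) fun k _ hk => by simp [hk.symm], if_pos rfl]

theorem sum_reflectionOpInv (G : ι → Module.End R M) {A : Module.End R M}
    (hA : (1 - ∑ i, G i) * A = 1) (ψ : ι → M) :
    ∑ j, reflectionOpInv G A ψ j = A (∑ k, (1 - G k) (ψ k)) := by
  set t := ∑ k, (1 - G k) (ψ k)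
  have hGA : (∑ i, G i) * A = A - 1 := by
    calc (∑ i, G i) * A = A - (1 - ∑ i, G i) * A := by noncomm_ring
      _ = A - 1 := by rw [hA]
  calc ∑ j, reflectionOpInv G A ψ j = t + ((∑ i, G i) * A) t := by
        simp only [reflectionOpInv_apply, sum_add_distrib, Module.End.mul_apply,
          LinearMap.sum_apply, t]
    _ = A t := by rw [hGA]; simp

theorem reflectionOp_reflectionOpInv {G Γ : ι → Module.End R M} {A : Module.End R M}
    (hΓ : ∀ i, Γ i * (1 - G i) = -G i) (hA : (1 - ∑ i, G i) * A = 1) (ψ : ι → M) :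
    reflectionOp Γ (reflectionOpInv G A ψ) = ψ := by
  funext i
  set v := A (∑ k, (1 - G k) (ψ k))
  have hΓi : Γ i ((1 - G i) (v - ψ i)) = -G i (v - ψ i) := by
    simpa using congrArg (· (v - ψ i)) (hΓ i)
  rw [reflectionOp_apply, sum_reflectionOpInv G hA, reflectionOpInv_apply]
  calc (1 - G i) (ψ i) + G i v + Γ i (v - ((1 - G i) (ψ i) + G i v))
      = (1 - G i) (ψ i) + G i v + Γ i ((1 - G i) (v - ψ i)) := by
        congr 2; simp only [LinearMap.sub_apply, Module.End.one_apply, map_sub]; abel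
    _ = ψ i := by
        rw [hΓi]; simp only [LinearMap.sub_apply, Module.End.one_apply, map_sub]; abel

theorem one_sub_apply_reflectionOp {G Γ : ι → Module.End R M}
    (hΓ : ∀ i, (1 - G i) * Γ i = -G i) (φ : ι → M) (i : ι) :
    (1 - G i) (reflectionOp Γ φ i) = φ i - G i (∑ k, φ k) := by
  have hΓi : (1 - G i) (Γ i (∑ k, φ k - φ i)) = -G i (∑ k, φ k - φ i) := by
    simpa using congrArg (· (∑ k, φ k - φ i)) (hΓ i)
  rw [reflectionOp_apply, map_add, hΓi]
  simp only [LinearMap.sub_apply, Module.End.one_apply, map_sub]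
  abel

theorem reflectionOpInv_reflectionOp {G Γ : ι → Module.End R M} {A : Module.End R M}
    (hΓ : ∀ i, (1 - G i) * Γ i = -G i) (hA : A * (1 - ∑ i, G i) = 1) (φ : ι → M) :
    reflectionOpInv G A (reflectionOp Γ φ) = φ := by
  funext i
  have hsum : ∑ k, (1 - G k) (reflectionOp Γ φ k) = (1 - ∑ k, G k) (∑ k, φ k) := by
    simp only [one_sub_apply_reflectionOp hΓ, sum_sub_distrib, LinearMap.sub_apply,
      Module.End.one_apply, LinearMap.sum_apply]
  have hAs : A ((1 - ∑ k, G k) (∑ k, φ k)) = ∑ k, φ k := by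
    simpa using congrArg (· (∑ k, φ k)) hA
  rw [reflectionOpInv_apply, hsum, hAs, one_sub_apply_reflectionOp hΓ]
  abel

end BlockReflection

open BlockReflection in
theorem stmt_4_general {X : Type*} [AddCommGroup X] [Module ℂ X] (n : ℕ)
    (G Γ : Fin n → Module.End ℂ X)
    (hΓ : ∀ i, (1 - G i) * (1 - Γ i) = 1 ∧ (1 - Γ i) * (1 - G i) = 1)
    (Γtot : Module.End ℂ X)
    (hΓtot₁ : (1 - ∑ i, G i) * (1 - Γtot) = 1)
    (hΓtot₂ : (1 - Γtot) * (1 - ∑ i, G i) = 1) :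
    Function.Bijective (fun φ : Fin n → X =>
      fun i => φ i + Γ i (∑ k ∈ Finset.univ.erase i, φ k))
    ∧ (∀ ψ : Fin n → X, (fun i => (fun φ : Fin n → X =>
          fun i => φ i + Γ i (∑ k ∈ Finset.univ.erase i, φ k))
            (fun j => ∑ k, ((if j = k then (1 - G j) else 0)
              + G j * (1 - Γtot) * (1 - G k)) (ψ k)) i) = ψ)
    ∧ (∀ φ : Fin n → X, (fun i => ∑ k, ((if i = k then (1 - G i) else 0)
          + G i * (1 - Γtot) * (1 - G k))
            ((fun j => φ j + Γ j (∑ l ∈ Finset.univ.erase j, φ l)) k)) = φ) := by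
  have hright : Function.RightInverse (reflectionOpInv G (1 - Γtot)) (reflectionOp Γ) :=
    reflectionOp_reflectionOpInv
      (fun i => mul_one_sub_eq_neg_of_one_sub_mul_one_sub_eq_one (hΓ i).2) hΓtot₁
  have hleft : Function.LeftInverse (reflectionOpInv G (1 - Γtot)) (reflectionOp Γ) :=
    reflectionOpInv_reflectionOp
      (fun i => one_sub_mul_eq_neg_of_one_sub_mul_one_sub_eq_one (hΓ i).1) hΓtot₂
  exact ⟨⟨hleft.injective, hright.surjective⟩, hright, hleft⟩

/-- If `I - G` is a bijection of `X` together with all the operators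
`I - G i`, then the block operator matrix `L` is a bijection of `Xⁿ`, and the components
of its inverse are `ω i j = (I - G i) δ_{ij} + G i (I - Γ)(I - G j)`, where `Γ` is defined
by `I - Γ = (I - G)⁻¹`; that is, `ψ ↦ (∑ j, ω i j (ψ j))ᵢ` is a two-sided inverse of `L`. -/
theorem stmt_4 {X : Type*} [AddCommGroup X] [Module ℂ X] (n : ℕ) (hn : 1 ≤ n)
    (G Γ : Fin n → Module.End ℂ X)
    (hΓ : ∀ i, (1 - G i) * (1 - Γ i) = 1 ∧ (1 - Γ i) * (1 - G i) = 1)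
    (hG : Function.Bijective ⇑(1 - ∑ i, G i : Module.End ℂ X))
    (Γtot : Module.End ℂ X)
    (hΓtot₁ : (1 - ∑ i, G i) * (1 - Γtot) = 1)
    (hΓtot₂ : (1 - Γtot) * (1 - ∑ i, G i) = 1) :
    Function.Bijective (fun φ : Fin n → X =>
      fun i => φ i + Γ i (∑ k ∈ Finset.univ.erase i, φ k))
    ∧ (∀ ψ : Fin n → X, (fun i => (fun φ : Fin n → X =>
          fun i => φ i + Γ i (∑ k ∈ Finset.univ.erase i, φ k))
            (fun j => ∑ k, ((if j = k then (1 - G j) else 0)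
              + G j * (1 - Γtot) * (1 - G k)) (ψ k)) i) = ψ)
    ∧ (∀ φ : Fin n → X, (fun i => ∑ k, ((if i = k then (1 - G i) else 0)
          + G i * (1 - Γtot) * (1 - G k))
            ((fun j => φ j + Γ j (∑ l ∈ Finset.univ.erase j, φ l)) k)) = φ) :=
  stmt_4_general n G Γ hΓ Γtot hΓtot₁ hΓtot₂
end
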